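/- arXiv:1601.00099 — 4 statements merged into one kernel-verified Lean document; each statement's English description precedes it below -/
import Mathlib

section
/- Let a < b be real numbers and p ≥ 1 a real number. If f : ℝ → ℝ is nonnegative and monotone increasing on [a,b], differentiable on [a,b], and satisfies f'(x) ≥ p for all x ∈ [a,b], then ∫_a^b f(x)^{p+2} dx − (1/(b−a)^{p−1})·(∫_a^b f(x) dx)^{p+1} ≥ f(a)^{p+1} · ∫_a^b f(x) dx. -/
open Real Set intervalIntegral

/-!
Write `g x = ∫ t in a..x, f t` and `c = (b - a) ^ (p - 1)`. The function
`F = ∫ f ^ (p + 2) - g ^ (p + 1) / c - f a ^ (p + 1) * g` vanishes at `a` and has derivative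
`f * h` with `h = f ^ (p + 1) - (p + 1) / c * g ^ p - f a ^ (p + 1)`. Again `h a = 0`, and since
`f' ≥ p > 0` makes `f` increasing, `g ≤ (b - a) f`, hence `g ^ (p - 1) f ≤ c f ^ p` and
`h' ≥ (p + 1) f ^ p (f' - p) ≥ 0`. So `h ≥ 0`, then `F ≥ 0`, and `F b ≥ 0` is the claim.
-/

theorem monotoneOn_Icc_of_hasDerivAt_nonneg {F F' : ℝ → ℝ} {a b : ℝ}
    (hF : ContinuousOn F (Icc a b)) (hF' : ∀ x ∈ Ioo a b, HasDerivAt F (F' x) x)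
    (hF'₀ : ∀ x ∈ Ioo a b, 0 ≤ F' x) : MonotoneOn F (Icc a b) :=
  monotoneOn_of_hasDerivWithinAt_nonneg (convex_Icc a b) hF
    (by simpa using fun x hx => (hF' x hx).hasDerivWithinAt) (by simpa using hF'₀)

theorem rpow_sub_one_mul_le_of_le_mul {G L y p : ℝ} (hG : 0 ≤ G) (hGL : G ≤ L * y) (hL : 0 ≤ L)
    (hy : 0 ≤ y) (hp : 1 ≤ p) : G ^ (p - 1) * y ≤ L ^ (p - 1) * y ^ p :=
  calc G ^ (p - 1) * y ≤ (L * y) ^ (p - 1) * y := by gcongr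
    _ = L ^ (p - 1) * y ^ p := by
      rw [mul_rpow hL hy, mul_assoc, ← rpow_add_one' hy (by linarith), sub_add_cancel]

section Primitive

variable {f : ℝ → ℝ} {a b : ℝ}

theorem continuousOn_primitive_Icc (hab : a ≤ b) (hf : ContinuousOn f (Icc a b)) :
    ContinuousOn (fun x => ∫ t in a..x, f t) (Icc a b) := by
  have hfi : MeasureTheory.IntegrableOn f (uIcc a b) := by
    simpa [uIcc_of_le hab] using hf.integrableOn_Icc
  simpa [uIcc_of_le hab] using continuousOn_primitive_interval hfi

theorem hasDerivAt_primitive_of_mem_Ioo (hf : ContinuousOn f (Icc a b)) {x : ℝ}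
    (hx : x ∈ Ioo a b) : HasDerivAt (fun y => ∫ t in a..y, f t) (f x) x :=
  integral_hasDerivAt_right
    ((hf.mono (Icc_subset_Icc_right hx.2.le)).intervalIntegrable_of_Icc hx.1.le)
    ((hf.mono Ioo_subset_Icc_self).stronglyMeasurableAtFilter isOpen_Ioo x hx)
    (hf.continuousAt (Icc_mem_nhds hx.1 hx.2))

theorem integral_le_sub_mul_of_monotoneOn (hf : MonotoneOn f (Icc a b)) {x : ℝ}
    (hx : x ∈ Icc a b) : ∫ t in a..x, f t ≤ (x - a) * f x := by
  have hfx : IntervalIntegrable f MeasureTheory.volume a x :=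
    (hf.mono (by simpa [uIcc_of_le hx.1] using Icc_subset_Icc_right hx.2)).intervalIntegrable
  simpa using integral_mono_on hx.1 hfx intervalIntegrable_const
    fun t ht => hf ⟨ht.1, ht.2.trans hx.2⟩ hx ht.2

end Primitive

section Increasing

variable {a b p : ℝ} {f f' : ℝ → ℝ}

theorem mul_integral_rpow_le_rpow_add_one_sub (hab : a < b) (hp : 1 ≤ p)
    (hnonneg : ∀ x ∈ Icc a b, 0 ≤ f x) (hderiv : ∀ x ∈ Icc a b, HasDerivAt f (f' x) x)
    (hf' : ∀ x ∈ Icc a b, p ≤ f' x) {x : ℝ} (hx : x ∈ Icc a b) :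
    (p + 1) / (b - a) ^ (p - 1) * (∫ t in a..x, f t) ^ p ≤ f x ^ (p + 1) - f a ^ (p + 1) := by
  set c := (b - a) ^ (p - 1)
  set g := fun x => ∫ t in a..x, f t
  have hfc : ContinuousOn f (Icc a b) := HasDerivAt.continuousOn hderiv
  have hmono : MonotoneOn f (Icc a b) :=
    monotoneOn_Icc_of_hasDerivAt_nonneg hfc (fun y hy => hderiv y (Ioo_subset_Icc_self hy))
      fun y hy => by linarith [hf' y (Ioo_subset_Icc_self hy)]
  have hg : ∀ y ∈ Icc a b, 0 ≤ g y ∧ g y ≤ (b - a) * f y := fun y hy =>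
    ⟨integral_nonneg hy.1 fun t ht => hnonneg t ⟨ht.1, ht.2.trans hy.2⟩,
      (integral_le_sub_mul_of_monotoneOn hmono hy).trans
        (by nlinarith [hnonneg y hy, hy.2])⟩
  let h y := f y ^ (p + 1) - (p + 1) / c * g y ^ p - f a ^ (p + 1)
  suffices MonotoneOn h (Icc a b) by
    have := this (left_mem_Icc.2 hab.le) hx hx.1
    simp only [h, g, integral_same, zero_rpow (by linarith : p ≠ 0)] at this
    linarith
  refine monotoneOn_Icc_of_hasDerivAt_nonneg
    (F' := fun y => f' y * (p + 1) * f y ^ p - (p + 1) / c * (f y * p * g y ^ (p - 1)))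
    (((hfc.rpow_const fun _ _ => Or.inr (by linarith)).sub (continuousOn_const.mul
      ((continuousOn_primitive_Icc hab.le hfc).rpow_const fun _ _ => Or.inr (by linarith)))).sub
      continuousOn_const) (fun y hy => ?_) (fun y hy => ?_)
  · have hyI := Ioo_subset_Icc_self hy
    simpa [h, g] using (((hderiv y hyI).rpow_const (p := p + 1) (Or.inr (by linarith))).sub
      (((hasDerivAt_primitive_of_mem_Ioo hfc hy).rpow_const (Or.inr hp)).const_mul
        ((p + 1) / c))).sub_const
      (f a ^ (p + 1))
  · have hyI := Ioo_subset_Icc_self hy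
    have hc : 0 < c := rpow_pos_of_pos (sub_pos.2 hab) _
    have hgf : g y ^ (p - 1) * f y ≤ c * f y ^ p := rpow_sub_one_mul_le_of_le_mul
      (hg y hyI).1 (hg y hyI).2 (sub_pos.2 hab).le (hnonneg y hyI) hp
    have hfp : 0 ≤ f y ^ p := rpow_nonneg (hnonneg y hyI) _
    refine sub_nonneg.2 ?_
    calc (p + 1) / c * (f y * p * g y ^ (p - 1)) = (p + 1) * p / c * (g y ^ (p - 1) * f y) := by
          ring
      _ ≤ (p + 1) * p / c * (c * f y ^ p) := by gcongr
      _ = p * (p + 1) * f y ^ p := by field_simp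
      _ ≤ f' y * (p + 1) * f y ^ p := by gcongr; exact hf' y hyI

theorem monotoneOn_integral_rpow_add_two_sub (hab : a < b) (hp : 1 ≤ p)
    (hnonneg : ∀ x ∈ Icc a b, 0 ≤ f x) (hderiv : ∀ x ∈ Icc a b, HasDerivAt f (f' x) x)
    (hf' : ∀ x ∈ Icc a b, p ≤ f' x) :
    MonotoneOn (fun x => (∫ t in a..x, f t ^ (p + 2)) -
      1 / (b - a) ^ (p - 1) * (∫ t in a..x, f t) ^ (p + 1) - f a ^ (p + 1) * ∫ t in a..x, f t)
      (Icc a b) := by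
  set c := (b - a) ^ (p - 1)
  set g := fun x => ∫ t in a..x, f t
  have hfc : ContinuousOn f (Icc a b) := HasDerivAt.continuousOn hderiv
  have hfc₂ : ContinuousOn (fun x => f x ^ (p + 2)) (Icc a b) :=
    hfc.rpow_const fun _ _ => Or.inr (by linarith)
  refine monotoneOn_Icc_of_hasDerivAt_nonneg
    (F' := fun y => f y ^ (p + 2) - 1 / c * (f y * (p + 1) * g y ^ p) - f a ^ (p + 1) * f y)
    (((continuousOn_primitive_Icc hab.le hfc₂).sub (continuousOn_const.mul
      ((continuousOn_primitive_Icc hab.le hfc).rpow_const fun _ _ => Or.inr (by linarith)))).sub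
      (continuousOn_const.mul (continuousOn_primitive_Icc hab.le hfc))) (fun y hy => ?_)
    (fun y hy => ?_)
  · have hg := hasDerivAt_primitive_of_mem_Ioo hfc hy
    have hg₁ : HasDerivAt (fun x => g x ^ (p + 1)) (f y * (p + 1) * g y ^ p) y := by
      simpa using hg.rpow_const (p := p + 1) (Or.inr (by linarith))
    exact ((hasDerivAt_primitive_of_mem_Ioo hfc₂ hy).sub (hg₁.const_mul (1 / c))).sub
      (hg.const_mul (f a ^ (p + 1)))
  · have hyI := Ioo_subset_Icc_self hy
    have hfy := hnonneg y hyI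
    have hh : (p + 1) / c * g y ^ p ≤ f y ^ (p + 1) - f a ^ (p + 1) :=
      mul_integral_rpow_le_rpow_add_one_sub hab hp hnonneg hderiv hf' hyI
    rw [show p + 2 = p + 1 + 1 by ring, rpow_add_one' hfy (by linarith)]
    calc 0 ≤ f y * (f y ^ (p + 1) - f a ^ (p + 1) - (p + 1) / c * g y ^ p) :=
          mul_nonneg hfy (sub_nonneg.2 hh)
      _ = _ := by ring

end Increasing

theorem qi_time_scale_real_thm34_general
    (a b p : ℝ) (hab : a < b) (hp : 1 ≤ p)
    (f f' : ℝ → ℝ)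
    (hnonneg : ∀ x ∈ Set.Icc a b, 0 ≤ f x)
    (hderiv : ∀ x ∈ Set.Icc a b, HasDerivAt f (f' x) x)
    (hf' : ∀ x ∈ Set.Icc a b, p ≤ f' x) :
    (∫ x in a..b, f x ^ (p + 2)) -
        (1 / (b - a) ^ (p - 1)) * (∫ x in a..b, f x) ^ (p + 1) ≥
      f a ^ (p + 1) * ∫ x in a..b, f x := by
  have := monotoneOn_integral_rpow_add_two_sub hab hp hnonneg hderiv hf'
    (left_mem_Icc.2 hab.le) (right_mem_Icc.2 hab.le) hab.le
  simp only [integral_same, zero_rpow (by linarith : p + 1 ≠ 0)] at this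
  linarith

theorem qi_time_scale_real_thm34
    (a b p : ℝ) (hab : a < b) (hp : 1 ≤ p)
    (f f' : ℝ → ℝ)
    (hnonneg : ∀ x ∈ Set.Icc a b, 0 ≤ f x)
    (hmono : MonotoneOn f (Set.Icc a b))
    (hderiv : ∀ x ∈ Set.Icc a b, HasDerivAt f (f' x) x)
    (hf' : ∀ x ∈ Set.Icc a b, p ≤ f' x) :
    (∫ x in a..b, f x ^ (p + 2)) -
        (1 / (b - a) ^ (p - 1)) * (∫ x in a..b, f x) ^ (p + 1) ≥
      f a ^ (p + 1) * ∫ x in a..b, f x :=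
  qi_time_scale_real_thm34_general a b p hab hp f f' hnonneg hderiv hf'
end

section
/- Let h > 0 be a real number, N ≥ 1 a natural number, and p ≥ 1 a real number. Let u : ℕ → ℝ satisfy u_k ≥ 0 and u_k ≤ u_{k+1} for all k. If for every k with 0 ≤ k ≤ N−1 one has u_k^p·(u_{k+1} − u_k)/h ≥ (p/(N·h)^{p−1})·u_{k+2}^p·((k+2)·h)^{p−1}, then h·Σ_{k=0}^{N−1} u_k^{p+2} − (1/(N·h)^{p−1})·(h·Σ_{k=0}^{N−1} u_k)^{p+1} ≥ u_0^p·(u_0 − (p+1)·h^p/(N·h)^{p−1}) · h·Σ_{k=0}^{N−1} u_k. -/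
open Real Finset

/-!
Put `S n = h ∑_{k<n} u k` (the Δ-integral from `a` to `a + n h`) and `c = (N h)^(1-p)`.
The sequence `φ n = u n ^ (p+1) - c (p+1) S (n+1) ^ p` is nondecreasing: by the tangent-line
bounds for the convex map `t ↦ t ^ q` (`q ≥ 1`) its increment is at least
`(p+1) u n ^ p (u (n+1) - u n) - c (p+1) p h u (n+1) S (n+2) ^ (p-1)`, and since `u` is
nondecreasing, `S (n+2) ≤ (n+2) h u (n+2)`, so the hypothesis makes this nonnegative.
Hence `φ n ≥ φ 0 = u 0 ^ p (u 0 - (p+1) h ^ p c)`. Multiplying by `h u n ≥ 0` and using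
`S (n+1) ^ (p+1) - S n ^ (p+1) ≤ (p+1) S (n+1) ^ p h u n` shows that
`h ∑_{k<n} u k ^ (p+2) - c S n ^ (p+1) - φ 0 S n` has nonnegative increments.
-/

namespace Real

theorem rpow_add_mul_rpow_sub_one_mul_sub_le {a b q : ℝ} (ha : 0 ≤ a) (hb : 0 < b)
    (hq : 1 ≤ q) : b ^ q + q * b ^ (q - 1) * (a - b) ≤ a ^ q := by
  have hbern := one_add_mul_self_le_rpow_one_add (s := a / b - 1)
    (by linarith [div_nonneg ha hb.le]) hq
  rw [add_sub_cancel, div_rpow ha hb.le] at hbern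
  have hbq : 0 < b ^ q := rpow_pos_of_pos hb q
  calc b ^ q + q * b ^ (q - 1) * (a - b) = (1 + q * (a / b - 1)) * b ^ q := by
        rw [rpow_sub_one hb.ne']; field_simp
    _ ≤ a ^ q / b ^ q * b ^ q := mul_le_mul_of_nonneg_right hbern hbq.le
    _ = a ^ q := div_mul_cancel₀ _ hbq.ne'

theorem rpow_sub_rpow_le_mul_sub {x y q : ℝ} (hy : 0 ≤ y) (hyx : y ≤ x) (hq : 1 ≤ q) :
    x ^ q - y ^ q ≤ q * x ^ (q - 1) * (x - y) := by
  rcases (hy.trans hyx).eq_or_lt with hx | hx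
  · obtain rfl : y = 0 := by linarith
    simp [← hx]
  · linarith [rpow_add_mul_rpow_sub_one_mul_sub_le hy hx hq]

theorem mul_sub_le_rpow_sub_rpow {x y q : ℝ} (hy : 0 ≤ y) (hyx : y ≤ x) (hq : 1 ≤ q) :
    q * y ^ (q - 1) * (x - y) ≤ x ^ q - y ^ q := by
  rcases hy.eq_or_lt with rfl | hy
  · rcases hq.eq_or_lt with rfl | hq
    · simp
    · rw [zero_rpow (by linarith), zero_rpow (by linarith)]
      simpa using rpow_nonneg hyx q
  · linarith [rpow_add_mul_rpow_sub_one_mul_sub_le (hy.le.trans hyx) hy hq]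

theorem mul_rpow_sub_one_le_rpow_mul_rpow_sub_one {a b s t p : ℝ} (hb : 0 ≤ b) (hab : a ≤ b)
    (hs : 0 ≤ s) (hst : s ≤ t * b) (ht : 0 ≤ t) (hp : 1 ≤ p) :
    a * s ^ (p - 1) ≤ b ^ p * t ^ (p - 1) :=
  calc a * s ^ (p - 1) ≤ b * (t * b) ^ (p - 1) :=
        mul_le_mul hab (rpow_le_rpow hs hst (by linarith)) (rpow_nonneg hs _) hb
    _ = b ^ (p - 1 + 1) * t ^ (p - 1) := by
        rw [rpow_add_one' hb (by linarith), mul_rpow ht hb]; ring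
    _ = b ^ p * t ^ (p - 1) := by rw [sub_add_cancel]

end Real

/-- `deltaIntegral h u n` is `∫_a^(a + n h) f(x) Δx` on `a + hℤ`, where `u k = f (a + k h)`. -/
def deltaIntegral (h : ℝ) (u : ℕ → ℝ) (n : ℕ) : ℝ :=
  h * ∑ k ∈ range n, u k

noncomputable def qiPotential (h : ℝ) (u : ℕ → ℝ) (p c : ℝ) (n : ℕ) : ℝ :=
  u n ^ (p + 1) - c * (p + 1) * deltaIntegral h u (n + 1) ^ p

section

variable {h p c : ℝ} {u : ℕ → ℝ}

@[simp]
theorem deltaIntegral_zero : deltaIntegral h u 0 = 0 := by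
  simp [deltaIntegral]

theorem deltaIntegral_succ (h : ℝ) (u : ℕ → ℝ) (n : ℕ) :
    deltaIntegral h u (n + 1) = deltaIntegral h u n + h * u n := by
  simp only [deltaIntegral, sum_range_succ, mul_add]

theorem deltaIntegral_nonneg (hh : 0 ≤ h) (hu : ∀ k, 0 ≤ u k) (n : ℕ) :
    0 ≤ deltaIntegral h u n :=
  mul_nonneg hh (sum_nonneg fun k _ ↦ hu k)

theorem deltaIntegral_le_succ (hh : 0 ≤ h) (hu : ∀ k, 0 ≤ u k) (n : ℕ) :
    deltaIntegral h u n ≤ deltaIntegral h u (n + 1) := by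
  rw [deltaIntegral_succ]
  linarith [mul_nonneg hh (hu n)]

theorem deltaIntegral_le_of_monotone (hh : 0 ≤ h) (hu : Monotone u) (n : ℕ) :
    deltaIntegral h u n ≤ n * h * u n := by
  have hsum : ∑ k ∈ range n, u k ≤ n * u n := by
    simpa using sum_le_card_nsmul (range n) u (u n) fun k hk ↦ hu (mem_range.1 hk).le
  calc deltaIntegral h u n ≤ h * (n * u n) := mul_le_mul_of_nonneg_left hsum hh
    _ = n * h * u n := by ring

theorem qiPotential_zero (hh : 0 ≤ h) (hu₀ : 0 ≤ u 0) (hp : p + 1 ≠ 0) :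
    qiPotential h u p c 0 = u 0 ^ p * (u 0 - (p + 1) * h ^ p * c) := by
  rw [qiPotential, zero_add, deltaIntegral_succ, deltaIntegral_zero, zero_add, mul_rpow hh hu₀,
    rpow_add_one' hu₀ hp]
  ring

theorem qiPotential_le_succ (hh : 0 ≤ h) (hu : ∀ k, 0 ≤ u k) (hmono : Monotone u)
    (hp : 1 ≤ p) (hc : 0 ≤ c) {n : ℕ}
    (hn : p * c * u (n + 2) ^ p * (((n : ℝ) + 2) * h) ^ (p - 1) * h ≤
      u n ^ p * (u (n + 1) - u n)) :
    qiPotential h u p c n ≤ qiPotential h u p c (n + 1) := by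
  have hu_incr : (p + 1) * u n ^ p * (u (n + 1) - u n) ≤ u (n + 1) ^ (p + 1) - u n ^ (p + 1) := by
    simpa using mul_sub_le_rpow_sub_rpow (hu n) (hmono n.le_succ) (by linarith : 1 ≤ p + 1)
  have hS_incr : deltaIntegral h u (n + 2) ^ p - deltaIntegral h u (n + 1) ^ p ≤
      p * deltaIntegral h u (n + 2) ^ (p - 1) * (h * u (n + 1)) := by
    have := rpow_sub_rpow_le_mul_sub (deltaIntegral_nonneg hh hu (n + 1))
      (deltaIntegral_le_succ hh hu (n + 1)) hp
    simpa only [deltaIntegral_succ h u (n + 1), add_sub_cancel_left] using this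
  have hS_le : deltaIntegral h u (n + 2) ≤ ((n : ℝ) + 2) * h * u (n + 2) := by
    exact_mod_cast deltaIntegral_le_of_monotone hh hmono (n + 2)
  have hS_bound : u (n + 1) * deltaIntegral h u (n + 2) ^ (p - 1) ≤
      u (n + 2) ^ p * (((n : ℝ) + 2) * h) ^ (p - 1) :=
    mul_rpow_sub_one_le_rpow_mul_rpow_sub_one (hu _) (hmono (n + 1).le_succ)
      (deltaIntegral_nonneg hh hu _) hS_le (by positivity) hp
  have hS_term : c * (p + 1) * (deltaIntegral h u (n + 2) ^ p - deltaIntegral h u (n + 1) ^ p) ≤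
      u (n + 1) ^ (p + 1) - u n ^ (p + 1) :=
    calc c * (p + 1) * (deltaIntegral h u (n + 2) ^ p - deltaIntegral h u (n + 1) ^ p)
        ≤ c * (p + 1) * (p * deltaIntegral h u (n + 2) ^ (p - 1) * (h * u (n + 1))) := by gcongr
      _ = (p + 1) * (p * c * h) * (u (n + 1) * deltaIntegral h u (n + 2) ^ (p - 1)) := by ring
      _ ≤ (p + 1) * (p * c * h) * (u (n + 2) ^ p * (((n : ℝ) + 2) * h) ^ (p - 1)) := by gcongr
      _ = (p + 1) * (p * c * u (n + 2) ^ p * (((n : ℝ) + 2) * h) ^ (p - 1) * h) := by ring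
      _ ≤ (p + 1) * (u n ^ p * (u (n + 1) - u n)) := by gcongr
      _ ≤ u (n + 1) ^ (p + 1) - u n ^ (p + 1) := by linarith
  unfold qiPotential
  linarith

theorem mul_deltaIntegral_le_of_le_qiPotential (hh : 0 ≤ h) (hu : ∀ k, 0 ≤ u k) (hp : 0 ≤ p)
    (hc : 0 ≤ c) {A : ℝ} {n : ℕ} (hA : ∀ m < n, A ≤ qiPotential h u p c m) :
    A * deltaIntegral h u n ≤
      deltaIntegral h (fun k ↦ u k ^ (p + 2)) n - c * deltaIntegral h u n ^ (p + 1) := by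
  induction n with
  | zero => simp [zero_rpow (by linarith : p + 1 ≠ 0)]
  | succ m ih =>
    have hS_incr : deltaIntegral h u (m + 1) ^ (p + 1) - deltaIntegral h u m ^ (p + 1) ≤
        (p + 1) * deltaIntegral h u (m + 1) ^ p * (h * u m) := by
      have := rpow_sub_rpow_le_mul_sub (deltaIntegral_nonneg hh hu m)
        (deltaIntegral_le_succ hh hu m) (by linarith : 1 ≤ p + 1)
      simpa only [add_sub_cancel_right, deltaIntegral_succ h u m, add_sub_cancel_left] using this
    have hpow : u m ^ (p + 2) = u m ^ (p + 1) * u m := by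
      rw [← rpow_add_one' (hu m) (by linarith)]
      ring_nf
    have hA_m := mul_le_mul_of_nonneg_right (hA m (lt_add_one m)) (mul_nonneg hh (hu m))
    have hAS :
        A * deltaIntegral h u (m + 1) = A * deltaIntegral h u m + A * (h * u m) := by
      rw [deltaIntegral_succ]
      ring
    rw [qiPotential] at hA_m
    rw [deltaIntegral_succ h (fun k ↦ u k ^ (p + 2)), hpow, hAS]
    linarith [ih fun k hk ↦ hA k (hk.trans (lt_add_one m)), mul_le_mul_of_nonneg_left hS_incr hc]

end

theorem qi_time_scale_hZ_thm32_general
    (h : ℝ) (hh : 0 < h) (N : ℕ) (p : ℝ) (hp : 1 ≤ p)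
    (u : ℕ → ℝ)
    (hnonneg : ∀ k, 0 ≤ u k)
    (hmono : ∀ k, u k ≤ u (k + 1))
    (hyp : ∀ k, k ≤ N - 1 →
      (p / ((N : ℝ) * h) ^ (p - 1)) * u (k + 2) ^ p * (((k : ℝ) + 2) * h) ^ (p - 1) ≤
        u k ^ p * (u (k + 1) - u k) / h) :
    h * ∑ k ∈ Finset.range N, u k ^ (p + 2) -
        (1 / ((N : ℝ) * h) ^ (p - 1)) * (h * ∑ k ∈ Finset.range N, u k) ^ (p + 1) ≥
      u 0 ^ p * (u 0 - (p + 1) * h ^ p / ((N : ℝ) * h) ^ (p - 1)) *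
        (h * ∑ k ∈ Finset.range N, u k) := by
  set c := 1 / ((N : ℝ) * h) ^ (p - 1)
  have hc : 0 ≤ c := by positivity
  have hstep (n : ℕ) (hn : n ≤ N - 1) : qiPotential h u p c n ≤ qiPotential h u p c (n + 1) :=
    qiPotential_le_succ hh.le hnonneg (monotone_nat_of_le_succ hmono) hp hc
      (by rw [mul_one_div]; exact (le_div_iff₀ hh).1 (hyp n hn))
  have hpot (m : ℕ) (hm : m < N) : qiPotential h u p c 0 ≤ qiPotential h u p c m := by
    induction m with
    | zero => exact le_rfl
    | succ m ih => exact (ih (by omega)).trans (hstep m (by omega))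
  have key := mul_deltaIntegral_le_of_le_qiPotential hh.le hnonneg (by linarith) hc hpot
  rw [qiPotential_zero hh.le (hnonneg 0) (by linarith)] at key
  rw [ge_iff_le, ← mul_one_div ((p + 1) * h ^ p)]
  exact key

theorem qi_time_scale_hZ_thm32
    (h : ℝ) (hh : 0 < h) (N : ℕ) (hN : 1 ≤ N) (p : ℝ) (hp : 1 ≤ p)
    (u : ℕ → ℝ)
    (hnonneg : ∀ k, 0 ≤ u k)
    (hmono : ∀ k, u k ≤ u (k + 1))
    (hyp : ∀ k, k ≤ N - 1 →
      (p / ((N : ℝ) * h) ^ (p - 1)) * u (k + 2) ^ p * (((k : ℝ) + 2) * h) ^ (p - 1) ≤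
        u k ^ p * (u (k + 1) - u k) / h) :
    h * ∑ k ∈ Finset.range N, u k ^ (p + 2) -
        (1 / ((N : ℝ) * h) ^ (p - 1)) * (h * ∑ k ∈ Finset.range N, u k) ^ (p + 1) ≥
      u 0 ^ p * (u 0 - (p + 1) * h ^ p / ((N : ℝ) * h) ^ (p - 1)) *
        (h * ∑ k ∈ Finset.range N, u k) :=
  qi_time_scale_hZ_thm32_general h hh N p hp u hnonneg hmono hyp
end

section
/- Let q > 1 be a real number, m ∈ ℤ, N ≥ 1 a natural number, and p ≥ 1 a real number. Let u : ℤ → ℝ satisfy u_k ≥ 0 and u_k ≤ u_{k+1} for all k. If for every integer k with m ≤ k ≤ m+N−1 one has u_k^p·(u_{k+1} − u_k)/((q−1)·q^k) ≥ (p/(q^{m+N} − q^m)^{p−1})·q·u_{k+2}^p·(q^{k+2} − q^m)^{p−1}, then Σ_{k=m}^{m+N−1} (q−1)·q^k·u_k^{p+2} − (1/(q^{m+N} − q^m)^{p−1})·(Σ_{k=m}^{m+N−1} (q−1)·q^k·u_k)^{p+1} ≥ u_m^p·(u_m − (p+1)·((q−1)·q^m)^p/(q^{m+N} − q^m)^{p−1})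 · Σ_{k=m}^{m+N−1} (q−1)·q^k·u_k. -/
open Real Finset

/-!
Write `S n = ∑ i < n, c i * v i` with `c i = (q - 1) * q ^ (m + i)`, `v i = u (m + i)` and
`K = 1 / (q ^ (m + N) - q ^ m) ^ (p - 1)`. By the mean value theorem for `x ↦ x ^ (p + 1)`, the
increment `K * (S (n + 1) ^ (p + 1) - S n ^ (p + 1))` is at most `(p + 1) * K * S (n + 1) ^ p * c n * v n`,
so the left-hand side is at least `∑ n < N, φ n * c n * v n` with
`φ n = v n ^ (p + 1) - (p + 1) * K * S (n + 1) ^ p`. The hypothesis is exactly what makes `φ`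
nondecreasing (mean value theorem for `x ↦ x ^ (p + 1)` and `x ↦ x ^ p`, and
`S (n + 2) ≤ v (n + 1) * ∑ i < n + 2, c i`), so the sum is at least `φ 0 * S N`, the right-hand side.
-/

theorem exists_rpow_sub_rpow_eq {r a b : ℝ} (hr : 1 ≤ r) (hab : a < b) :
    ∃ c ∈ Set.Ioo a b, b ^ r - a ^ r = r * c ^ (r - 1) * (b - a) := by
  obtain ⟨c, hc, hslope⟩ := exists_hasDerivAt_eq_slope (fun x : ℝ => x ^ r)
    (fun x => r * x ^ (r - 1)) hab
    (fun x _ => (hasDerivAt_rpow_const (Or.inr hr)).continuousAt.continuousWithinAt)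
    (fun x _ => hasDerivAt_rpow_const (Or.inr hr))
  refine ⟨c, hc, ?_⟩
  rw [hslope, div_mul_cancel₀ _ (sub_ne_zero.2 hab.ne')]

theorem mul_rpow_sub_one_mul_sub_le_rpow_sub_rpow {r a b : ℝ} (hr : 1 ≤ r) (ha : 0 ≤ a)
    (hab : a ≤ b) : r * a ^ (r - 1) * (b - a) ≤ b ^ r - a ^ r := by
  rcases hab.eq_or_lt with rfl | hab
  · simp
  obtain ⟨c, hc, heq⟩ := exists_rpow_sub_rpow_eq hr hab
  rw [heq]
  gcongr
  exact hc.1.le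

theorem rpow_sub_rpow_le_mul_rpow_sub_one_mul_sub {r a b : ℝ} (hr : 1 ≤ r) (ha : 0 ≤ a)
    (hab : a ≤ b) : b ^ r - a ^ r ≤ r * b ^ (r - 1) * (b - a) := by
  rcases hab.eq_or_lt with rfl | hab
  · simp
  obtain ⟨c, hc, heq⟩ := exists_rpow_sub_rpow_eq hr hab
  rw [heq]
  have hc0 : 0 ≤ c := ha.trans hc.1.le
  gcongr
  exact hc.2.le

theorem rpow_sub_one_mul_le_rpow_mul_rpow_sub_one {p s a b A : ℝ} (hp : 1 ≤ p) (hs : 0 ≤ s)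
    (ha : 0 ≤ a) (hA : 0 ≤ A) (hsA : s ≤ a * A) (hab : a ≤ b) :
    s ^ (p - 1) * a ≤ b ^ p * A ^ (p - 1) := by
  have hp1 : 0 ≤ p - 1 := by linarith
  calc s ^ (p - 1) * a ≤ (a * A) ^ (p - 1) * a := by gcongr
    _ = a ^ p * A ^ (p - 1) := by
      rw [mul_rpow ha hA, mul_right_comm, ← rpow_add_one' ha (by linarith), sub_add_cancel]
    _ ≤ b ^ p * A ^ (p - 1) := by gcongr

section WeightedSums

variable {p K : ℝ} {c v : ℕ → ℝ}

noncomputable def potential (p K : ℝ) (c v : ℕ → ℝ) (n : ℕ) : ℝ :=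
  v n ^ (p + 1) - (p + 1) * K * (∑ i ∈ range (n + 1), c i * v i) ^ p

theorem sum_range_mul_le_mul_sum_range (hc : ∀ i, 0 ≤ c i) (hv : Monotone v) (n : ℕ) :
    ∑ i ∈ range (n + 1), c i * v i ≤ v n * ∑ i ∈ range (n + 1), c i := by
  rw [mul_sum]
  refine sum_le_sum fun i hi => ?_
  rw [mul_comm (v n)]
  exact mul_le_mul_of_nonneg_left (hv (Nat.lt_succ_iff.1 (mem_range.1 hi))) (hc i)

theorem potential_le_potential_succ (hp : 1 ≤ p) (hK : 0 ≤ K) (hc : ∀ i, 0 ≤ c i)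
    (hv0 : 0 ≤ v 0) (hv : Monotone v) {n : ℕ}
    (h : p * K * c (n + 1) * v (n + 2) ^ p * (∑ i ∈ range (n + 2), c i) ^ (p - 1) ≤
      v n ^ p * (v (n + 1) - v n)) :
    potential p K c v n ≤ potential p K c v (n + 1) := by
  have hv' : ∀ i, 0 ≤ v i := fun i => hv0.trans (hv i.zero_le)
  set S := ∑ i ∈ range (n + 1), c i * v i
  set S' := ∑ i ∈ range (n + 2), c i * v i
  have hS : 0 ≤ S := sum_nonneg fun i _ => mul_nonneg (hc i) (hv' i)
  have hSS' : S' = S + c (n + 1) * v (n + 1) := sum_range_succ _ _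
  have hcv : 0 ≤ c (n + 1) * v (n + 1) := mul_nonneg (hc _) (hv' _)
  have hS' : S' ^ (p - 1) * v (n + 1) ≤ v (n + 2) ^ p * (∑ i ∈ range (n + 2), c i) ^ (p - 1) :=
    rpow_sub_one_mul_le_rpow_mul_rpow_sub_one hp (by linarith) (hv' _)
      (sum_nonneg fun i _ => hc i) (sum_range_mul_le_mul_sum_range hc hv _) (hv (n + 1).le_succ)
  have hSp : S' ^ p - S ^ p ≤ p * S' ^ (p - 1) * (S' - S) :=
    rpow_sub_rpow_le_mul_rpow_sub_one_mul_sub hp hS (by linarith)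
  have hvp : (p + 1) * v n ^ p * (v (n + 1) - v n) ≤ v (n + 1) ^ (p + 1) - v n ^ (p + 1) := by
    simpa using mul_rpow_sub_one_mul_sub_le_rpow_sub_rpow (r := p + 1) (by linarith) (hv' n)
      (hv n.le_succ)
  have hKS : (p + 1) * K * (S' ^ p - S ^ p) ≤ (p + 1) * (v n ^ p * (v (n + 1) - v n)) :=
    calc (p + 1) * K * (S' ^ p - S ^ p)
        ≤ (p + 1) * K * (p * S' ^ (p - 1) * (S' - S)) := by gcongr
      _ = (p + 1) * (p * K * c (n + 1) * (S' ^ (p - 1) * v (n + 1))) := by rw [hSS']; ring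
      _ ≤ (p + 1) * (p * K * c (n + 1) *
            (v (n + 2) ^ p * (∑ i ∈ range (n + 2), c i) ^ (p - 1))) := by
        have := hc (n + 1); gcongr
      _ ≤ (p + 1) * (v n ^ p * (v (n + 1) - v n)) :=
        mul_le_mul_of_nonneg_left (by linarith) (by linarith)
  unfold potential
  linarith

theorem potential_zero (hp : 0 ≤ p) (hc : 0 ≤ c 0) (hv : 0 ≤ v 0) :
    potential p K c v 0 = v 0 ^ p * (v 0 - (p + 1) * K * c 0 ^ p) := by
  rw [potential, sum_range_one, mul_rpow hc hv, rpow_add_one' hv (by linarith)]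
  ring

theorem potential_zero_le (hp : 1 ≤ p) (hK : 0 ≤ K) (hc : ∀ i, 0 ≤ c i) (hv0 : 0 ≤ v 0)
    (hv : Monotone v) {N : ℕ}
    (h : ∀ n, n + 2 ≤ N → p * K * c (n + 1) * v (n + 2) ^ p *
      (∑ i ∈ range (n + 2), c i) ^ (p - 1) ≤ v n ^ p * (v (n + 1) - v n)) :
    ∀ n < N, potential p K c v 0 ≤ potential p K c v n := by
  intro n hn
  induction n with
  | zero => rfl
  | succ n ih =>
    exact (ih (by omega)).trans (potential_le_potential_succ hp hK hc hv0 hv (h n hn))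

theorem potential_mul_le (hp : 0 ≤ p) (hK : 0 ≤ K) (hc : ∀ i, 0 ≤ c i) (hv : ∀ i, 0 ≤ v i)
    (n : ℕ) :
    potential p K c v n * (c n * v n) ≤ c n * v n ^ (p + 2) -
      K * ((∑ i ∈ range (n + 1), c i * v i) ^ (p + 1) - (∑ i ∈ range n, c i * v i) ^ (p + 1)) := by
  set S := ∑ i ∈ range n, c i * v i
  have hS : 0 ≤ S := sum_nonneg fun i _ => mul_nonneg (hc i) (hv i)
  have hcv : 0 ≤ c n * v n := mul_nonneg (hc n) (hv n)
  have hmvt := rpow_sub_rpow_le_mul_rpow_sub_one_mul_sub (r := p + 1) (by linarith) hS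
    (le_add_of_nonneg_right hcv)
  have hvp : v n ^ (p + 2) = v n ^ (p + 1) * v n := by
    rw [← rpow_add_one' (hv n) (by linarith)]
    ring_nf
  rw [sum_range_succ, hvp, potential, sum_range_succ]
  simp only [add_sub_cancel_right, add_sub_cancel_left] at hmvt
  have := mul_le_mul_of_nonneg_left hmvt hK
  linarith

theorem potential_zero_mul_sum_le (hp : 1 ≤ p) (hK : 0 ≤ K) (hc : ∀ i, 0 ≤ c i)
    (hv0 : 0 ≤ v 0) (hv : Monotone v) {N : ℕ}
    (h : ∀ n, n + 2 ≤ N → p * K * c (n + 1) * v (n + 2) ^ p *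
      (∑ i ∈ range (n + 2), c i) ^ (p - 1) ≤ v n ^ p * (v (n + 1) - v n)) :
    potential p K c v 0 * ∑ i ∈ range N, c i * v i ≤
      ∑ i ∈ range N, c i * v i ^ (p + 2) - K * (∑ i ∈ range N, c i * v i) ^ (p + 1) := by
  have hv' : ∀ i, 0 ≤ v i := fun i => hv0.trans (hv i.zero_le)
  suffices ∀ n ≤ N, potential p K c v 0 * ∑ i ∈ range n, c i * v i ≤
      ∑ i ∈ range n, c i * v i ^ (p + 2) - K * (∑ i ∈ range n, c i * v i) ^ (p + 1) from
    this N le_rfl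
  intro n hn
  induction n with
  | zero => simp [zero_rpow (by linarith : p + 1 ≠ 0)]
  | succ n ih =>
    have hpot := mul_le_mul_of_nonneg_right (potential_zero_le hp hK hc hv0 hv h n hn)
      (mul_nonneg (hc n) (hv' n))
    have hinc := potential_mul_le (zero_le_one.trans hp) hK hc hv' n
    rw [sum_range_succ] at hinc ⊢
    rw [sum_range_succ]
    linarith [ih (by omega)]

end WeightedSums

theorem sum_Icc_int_eq_sum_range {M : Type*} [AddCommMonoid M] (f : ℤ → M) (m : ℤ) (N : ℕ) :
    ∑ k ∈ Icc m (m + N - 1), f k = ∑ i ∈ range N, f (m + i) := by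
  symm
  refine sum_nbij' (fun i : ℕ => m + i) (fun k => (k - m).toNat) ?_ ?_ ?_ ?_ ?_ <;>
    intro x hx <;> simp only [mem_range, mem_Icc] at * <;> omega

theorem sum_range_sub_one_mul_zpow {q : ℝ} (hq : q ≠ 0) (m : ℤ) (n : ℕ) :
    ∑ i ∈ range n, (q - 1) * q ^ (m + i) = q ^ (m + n) - q ^ m := by
  have : ∀ i : ℕ, (q - 1) * q ^ (m + i) = q ^ (m + (i + 1 : ℕ)) - q ^ (m + i) := fun i => by
    rw [Nat.cast_succ, ← add_assoc, zpow_add_one₀ hq]; ring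
  simp only [this, sum_range_sub (fun i : ℕ => q ^ (m + i)), Nat.cast_zero, add_zero]

theorem qi_time_scale_qZ_thm32_general
    (q : ℝ) (hq : 1 < q) (m : ℤ) (N : ℕ) (p : ℝ) (hp : 1 ≤ p)
    (u : ℤ → ℝ)
    (hnonneg : ∀ k : ℤ, 0 ≤ u k)
    (hmono : ∀ k : ℤ, u k ≤ u (k + 1))
    (hyp : ∀ k : ℤ, m ≤ k → k ≤ m + (N : ℤ) - 1 →
      (p / (q ^ (m + (N : ℤ)) - q ^ m) ^ (p - 1)) * q * u (k + 2) ^ p *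
          (q ^ (k + 2) - q ^ m) ^ (p - 1) ≤
        u k ^ p * (u (k + 1) - u k) / ((q - 1) * q ^ k)) :
    (∑ k ∈ Finset.Icc m (m + (N : ℤ) - 1), (q - 1) * q ^ k * u k ^ (p + 2)) -
        (1 / (q ^ (m + (N : ℤ)) - q ^ m) ^ (p - 1)) *
          (∑ k ∈ Finset.Icc m (m + (N : ℤ) - 1), (q - 1) * q ^ k * u k) ^ (p + 1) ≥
      u m ^ p *
          (u m - (p + 1) * ((q - 1) * q ^ m) ^ p /
            (q ^ (m + (N : ℤ)) - q ^ m) ^ (p - 1)) *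
        ∑ k ∈ Finset.Icc m (m + (N : ℤ) - 1), (q - 1) * q ^ k * u k := by
  have hq0 : 0 < q := by linarith
  have hc : ∀ i : ℕ, 0 < (q - 1) * q ^ (m + i) := fun i => mul_pos (by linarith) (zpow_pos hq0 _)
  have hB : 0 ≤ q ^ (m + (N : ℤ)) - q ^ m :=
    sub_nonneg.2 (zpow_le_zpow_right₀ hq.le (by omega))
  have hu : Monotone fun i : ℕ => u (m + i) :=
    monotone_nat_of_le_succ fun i => by simpa [add_assoc] using hmono (m + i)
  have key := potential_zero_mul_sum_le (N := N)
    (K := 1 / (q ^ (m + (N : ℤ)) - q ^ m) ^ (p - 1)) hp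
    (one_div_nonneg.2 (rpow_nonneg hB _)) (fun i => (hc i).le) (hnonneg (m + (0 : ℕ))) hu
    (fun n hn => ?_)
  · rw [potential_zero (by linarith) (hc 0).le (hnonneg _)] at key
    simp only [sum_Icc_int_eq_sum_range, ge_iff_le]
    convert key using 2
    simp only [Nat.cast_zero, add_zero]
    ring
  · have hk := (le_div_iff₀ (hc n)).1 (hyp (m + n) (by omega) (by omega))
    rw [sum_range_sub_one_mul_zpow hq0.ne']
    simp only [Nat.cast_add, Nat.cast_one, Nat.cast_ofNat, ← add_assoc]
    calc _ = p / (q ^ (m + (N : ℤ)) - q ^ m) ^ (p - 1) * q * u (m + n + 2) ^ p *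
          (q ^ (m + n + 2) - q ^ m) ^ (p - 1) * ((q - 1) * q ^ (m + n)) := by
          rw [zpow_add_one₀ hq0.ne']; ring
      _ ≤ _ := hk

theorem qi_time_scale_qZ_thm32
    (q : ℝ) (hq : 1 < q) (m : ℤ) (N : ℕ) (hN : 1 ≤ N) (p : ℝ) (hp : 1 ≤ p)
    (u : ℤ → ℝ)
    (hnonneg : ∀ k : ℤ, 0 ≤ u k)
    (hmono : ∀ k : ℤ, u k ≤ u (k + 1))
    (hyp : ∀ k : ℤ, m ≤ k → k ≤ m + (N : ℤ) - 1 →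
      (p / (q ^ (m + (N : ℤ)) - q ^ m) ^ (p - 1)) * q * u (k + 2) ^ p *
          (q ^ (k + 2) - q ^ m) ^ (p - 1) ≤
        u k ^ p * (u (k + 1) - u k) / ((q - 1) * q ^ k)) :
    (∑ k ∈ Finset.Icc m (m + (N : ℤ) - 1), (q - 1) * q ^ k * u k ^ (p + 2)) -
        (1 / (q ^ (m + (N : ℤ)) - q ^ m) ^ (p - 1)) *
          (∑ k ∈ Finset.Icc m (m + (N : ℤ) - 1), (q - 1) * q ^ k * u k) ^ (p + 1) ≥
      u m ^ p *
          (u m - (p + 1) * ((q - 1) * q ^ m) ^ p /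
            (q ^ (m + (N : ℤ)) - q ^ m) ^ (p - 1)) *
        ∑ k ∈ Finset.Icc m (m + (N : ℤ) - 1), (q - 1) * q ^ k * u k :=
  qi_time_scale_qZ_thm32_general q hq m N p hp u hnonneg hmono hyp
end

section
/- Let q > 1 be a real number, m ∈ ℤ, N ≥ 1 a natural number, and t ≥ 3 a real number. Let u : ℤ → ℝ satisfy u_k ≥ 0 and u_k ≤ u_{k+1} for all k. If for every integer k with m+1 ≤ k ≤ m+N one has u_{k−1}^{t−2}·(u_k − u_{k−1})/(q^k − q^{k−1}) ≥ (t−2)·u_k^{t−2}·(q^k − q^m)^{t−3}, then Σ_{k=m+1}^{m+N} (q^k − q^{k−1})·u_k^t − (Σ_{k=m+1}^{m+N} (q^k − q^{k−1})·u_k)^{t−1} ≥ u_m^{t−1} · Σ_{k=m+1}^{m+N} (q^k − q^{k−1})·u_k. -/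
/-!
Write `S b = ∫ u ∇x` and `T b = ∫ u^t ∇x` over `(m, b]`. By induction on `b`, first
`(t-1) S^(t-2) + u_m^(t-1) ≤ u_b^(t-1)`, whose increment is controlled by the hypothesis, and then
`S^(t-1) + u_m^(t-1) S ≤ T`, whose increment is `(x_b - x_(b-1)) u_b` times the first inequality.
Each increment of a power of `S` is bounded by the tangent line of `s ↦ s^p` at the right endpoint.
-/

open Real Finset

/-- Bernoulli's inequality, homogenized. -/
lemma rpow_add_mul_rpow_sub_one_mul_sub_le {p a b : ℝ} (hp : 1 ≤ p) (ha : 0 ≤ a) (hb : 0 ≤ b) :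
    a ^ p + p * a ^ (p - 1) * (b - a) ≤ b ^ p := by
  rcases ha.eq_or_lt with rfl | ha
  · rcases hp.eq_or_lt with rfl | hp
    · simp
    · simp [zero_rpow (by linarith : p ≠ 0), zero_rpow (by linarith : p - 1 ≠ 0),
        rpow_nonneg hb]
  · have hs : -1 ≤ (b - a) / a := by
      rw [le_div_iff₀ ha]; linarith
    have bernoulli := one_add_mul_self_le_rpow_one_add hs hp
    rw [show 1 + (b - a) / a = b / a by field_simp; ring, div_rpow hb ha.le,
      le_div_iff₀ (rpow_pos_of_pos ha p)] at bernoulli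
    rw [rpow_sub_one ha.ne']
    calc a ^ p + p * (a ^ p / a) * (b - a) = (1 + p * ((b - a) / a)) * a ^ p := by ring
      _ ≤ b ^ p := bernoulli

lemma add_rpow_le_rpow_add_mul_rpow {p a h : ℝ} (hp : 1 ≤ p) (ha : 0 ≤ a) (hh : 0 ≤ h) :
    (a + h) ^ p ≤ a ^ p + p * (a + h) ^ (p - 1) * h := by
  have tangent := rpow_add_mul_rpow_sub_one_mul_sub_le hp (add_nonneg ha hh) ha
  rw [show a - (a + h) = -h by ring] at tangent
  linarith

/-- The nabla integral `∫_{x m}^{x b} f ∇` over the isolated time scale `{x k | k ∈ ℤ}`,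
where `f k` stands for the value at the point `x k`. -/
noncomputable def nablaIntegral (x f : ℤ → ℝ) (m b : ℤ) : ℝ :=
  ∑ k ∈ Icc (m + 1) b, (x k - x (k - 1)) * f k

section

variable {x u f : ℤ → ℝ} {m b : ℤ} {t : ℝ}

@[simp]
lemma nablaIntegral_self : nablaIntegral x f m m = 0 := by
  simp [nablaIntegral]

lemma nablaIntegral_succ (h : m ≤ b) :
    nablaIntegral x f m (b + 1) = nablaIntegral x f m b + (x (b + 1) - x b) * f (b + 1) := by
  rw [nablaIntegral, ← insert_Icc_right_eq_Icc_add_one (by omega), sum_insert (by simp),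
    add_sub_cancel_right, add_comm, nablaIntegral]

lemma nablaIntegral_nonneg (hx : Monotone x) (hf : ∀ k, 0 ≤ f k) : 0 ≤ nablaIntegral x f m b :=
  sum_nonneg fun k _ => mul_nonneg (sub_nonneg.2 (hx (by omega))) (hf k)

lemma nablaIntegral_le_mul_sub (hx : Monotone x) (hu : Monotone u) (hmb : m ≤ b) :
    nablaIntegral x u m b ≤ u b * (x b - x m) := by
  induction b, hmb using Int.leInduction with
  | base => simp
  | succ b hmb ih =>
    have hmono : u b * (x b - x m) ≤ u (b + 1) * (x b - x m) :=
      mul_le_mul_of_nonneg_right (hu (by omega)) (sub_nonneg.2 (hx hmb))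
    rw [nablaIntegral_succ hmb]
    linarith

variable (hx : Monotone x) (hu0 : ∀ k, 0 ≤ u k) (hu : Monotone u) (ht : 3 ≤ t)
include hx hu0 hu ht

lemma mul_nablaIntegral_rpow_add_rpow_le (hmb : m ≤ b)
    (hyp : ∀ k, m + 1 ≤ k → k ≤ b →
      (t - 2) * u k ^ (t - 2) * (x k - x m) ^ (t - 3) ≤
        u (k - 1) ^ (t - 2) * (u k - u (k - 1)) / (x k - x (k - 1))) :
    (t - 1) * nablaIntegral x u m b ^ (t - 2) + u m ^ (t - 1) ≤ u b ^ (t - 1) := by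
  induction b, hmb using Int.leInduction with
  | base => simp [zero_rpow (by linarith : t - 2 ≠ 0)]
  | succ b hmb ih =>
    have ih := ih fun k hk hkb => hyp k hk (by omega)
    set X := nablaIntegral x u m b
    set Y := nablaIntegral x u m (b + 1)
    set w := x (b + 1) - x b
    set d := x (b + 1) - x m
    have hw : 0 ≤ w := sub_nonneg.2 (hx (by omega))
    have hA := hu0 b
    have hB := hu0 (b + 1)
    have hAB : u b ≤ u (b + 1) := hu (by omega)
    have hY : Y = X + w * u (b + 1) := nablaIntegral_succ hmb
    have hX0 : 0 ≤ X := nablaIntegral_nonneg hx hu0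
    have hYd : Y ≤ u (b + 1) * d := nablaIntegral_le_mul_sub hx hu (by omega)
    have hstep : (t - 2) * u (b + 1) ^ (t - 2) * d ^ (t - 3) * w ≤
        u b ^ (t - 2) * (u (b + 1) - u b) := by
      refine mul_le_of_le_div₀ (mul_nonneg (rpow_nonneg hA _) (by linarith)) hw ?_
      simpa using hyp (b + 1) (by omega) le_rfl
    have hY0 : 0 ≤ Y := hY ▸ add_nonneg hX0 (mul_nonneg hw hB)
    have hYX := add_rpow_le_rpow_add_mul_rpow (by linarith : 1 ≤ t - 2) hX0 (mul_nonneg hw hB)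
    rw [← hY, show t - 2 - 1 = t - 3 by ring] at hYX
    have hYB : Y ^ (t - 3) * u (b + 1) ≤ u (b + 1) ^ (t - 2) * d ^ (t - 3) := by
      have hd : 0 ≤ d := sub_nonneg.2 (hx (by omega))
      have := rpow_le_rpow hY0 hYd (by linarith : 0 ≤ t - 3)
      rw [mul_rpow hB hd] at this
      rw [show t - 2 = t - 3 + 1 by ring, rpow_add_one' hB (by linarith)]
      nlinarith [rpow_nonneg hB (t - 3)]
    have hAB' := rpow_add_mul_rpow_sub_one_mul_sub_le (by linarith : 1 ≤ t - 1) hA hB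
    rw [show t - 1 - 1 = t - 2 by ring] at hAB'
    have ht1 : 0 ≤ (t - 1) * (t - 2) * w := mul_nonneg (by nlinarith) hw
    calc (t - 1) * Y ^ (t - 2) + u m ^ (t - 1)
        ≤ (t - 1) * X ^ (t - 2) + u m ^ (t - 1) +
            (t - 1) * (t - 2) * w * (Y ^ (t - 3) * u (b + 1)) := by
          nlinarith
      _ ≤ u b ^ (t - 1) + (t - 1) * (t - 2) * w * (u (b + 1) ^ (t - 2) * d ^ (t - 3)) := by
          gcongr
      _ ≤ u b ^ (t - 1) + (t - 1) * (u b ^ (t - 2) * (u (b + 1) - u b)) := by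
          nlinarith
      _ ≤ u (b + 1) ^ (t - 1) := by linarith

lemma nablaIntegral_rpow_add_mul_le_nablaIntegral_rpow (hmb : m ≤ b)
    (hyp : ∀ k, m + 1 ≤ k → k ≤ b →
      (t - 2) * u k ^ (t - 2) * (x k - x m) ^ (t - 3) ≤
        u (k - 1) ^ (t - 2) * (u k - u (k - 1)) / (x k - x (k - 1))) :
    nablaIntegral x u m b ^ (t - 1) + u m ^ (t - 1) * nablaIntegral x u m b ≤
      nablaIntegral x (fun k => u k ^ t) m b := by
  induction b, hmb using Int.leInduction with
  | base => simp [zero_rpow (by linarith : t - 1 ≠ 0)]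
  | succ b hmb ih =>
    have ih := ih fun k hk hkb => hyp k hk (by omega)
    set X := nablaIntegral x u m b
    set Y := nablaIntegral x u m (b + 1)
    set w := x (b + 1) - x b
    have hw : 0 ≤ w := sub_nonneg.2 (hx (by omega))
    have hB := hu0 (b + 1)
    have hY : Y = X + w * u (b + 1) := nablaIntegral_succ hmb
    have hX0 : 0 ≤ X := nablaIntegral_nonneg hx hu0
    have hYX := add_rpow_le_rpow_add_mul_rpow (by linarith : 1 ≤ t - 1) hX0 (mul_nonneg hw hB)
    rw [← hY, show t - 1 - 1 = t - 2 by ring] at hYX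
    have hH : (t - 1) * Y ^ (t - 2) + u m ^ (t - 1) ≤ u (b + 1) ^ (t - 1) :=
      mul_nablaIntegral_rpow_add_rpow_le hx hu0 hu ht (by omega) hyp
    have hBt : u (b + 1) ^ t = u (b + 1) ^ (t - 1) * u (b + 1) := by
      rw [← rpow_add_one' hB (by linarith), sub_add_cancel]
    have hmY : u m ^ (t - 1) * Y = u m ^ (t - 1) * X + u m ^ (t - 1) * (w * u (b + 1)) := by
      rw [hY]; ring
    rw [nablaIntegral_succ hmb, hBt]
    calc Y ^ (t - 1) + u m ^ (t - 1) * Y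
        ≤ X ^ (t - 1) + u m ^ (t - 1) * X +
            w * u (b + 1) * ((t - 1) * Y ^ (t - 2) + u m ^ (t - 1)) := by linarith
      _ ≤ X ^ (t - 1) + u m ^ (t - 1) * X + w * u (b + 1) * u (b + 1) ^ (t - 1) := by
          gcongr
      _ ≤ _ := by linarith

end

theorem qi_nabla_qZ_thm36_general
    (q : ℝ) (hq : 1 < q) (m : ℤ) (N : ℕ) (t : ℝ) (ht : 3 ≤ t)
    (u : ℤ → ℝ)
    (hnonneg : ∀ k : ℤ, 0 ≤ u k)
    (hmono : ∀ k : ℤ, u k ≤ u (k + 1))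
    (hyp : ∀ k : ℤ, m + 1 ≤ k → k ≤ m + (N : ℤ) →
      (t - 2) * u k ^ (t - 2) * (q ^ k - q ^ m) ^ (t - 3) ≤
        u (k - 1) ^ (t - 2) * (u k - u (k - 1)) / (q ^ k - q ^ (k - 1))) :
    (∑ k ∈ Finset.Icc (m + 1) (m + (N : ℤ)), (q ^ k - q ^ (k - 1)) * u k ^ t) -
        (∑ k ∈ Finset.Icc (m + 1) (m + (N : ℤ)), (q ^ k - q ^ (k - 1)) * u k) ^ (t - 1) ≥
      u m ^ (t - 1) *
        ∑ k ∈ Finset.Icc (m + 1) (m + (N : ℤ)), (q ^ k - q ^ (k - 1)) * u k := by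
  have hx : Monotone fun k : ℤ => q ^ k := fun _ _ h => zpow_le_zpow_right₀ hq.le h
  rw [ge_iff_le, le_sub_iff_add_le']
  exact nablaIntegral_rpow_add_mul_le_nablaIntegral_rpow hx hnonneg
    (monotone_int_of_le_succ hmono) ht (by omega) hyp

theorem qi_nabla_qZ_thm36
    (q : ℝ) (hq : 1 < q) (m : ℤ) (N : ℕ) (hN : 1 ≤ N) (t : ℝ) (ht : 3 ≤ t)
    (u : ℤ → ℝ)
    (hnonneg : ∀ k : ℤ, 0 ≤ u k)
    (hmono : ∀ k : ℤ, u k ≤ u (k + 1))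
    (hyp : ∀ k : ℤ, m + 1 ≤ k → k ≤ m + (N : ℤ) →
      (t - 2) * u k ^ (t - 2) * (q ^ k - q ^ m) ^ (t - 3) ≤
        u (k - 1) ^ (t - 2) * (u k - u (k - 1)) / (q ^ k - q ^ (k - 1))) :
    (∑ k ∈ Finset.Icc (m + 1) (m + (N : ℤ)), (q ^ k - q ^ (k - 1)) * u k ^ t) -
        (∑ k ∈ Finset.Icc (m + 1) (m + (N : ℤ)), (q ^ k - q ^ (k - 1)) * u k) ^ (t - 1) ≥
      u m ^ (t - 1) *
        ∑ k ∈ Finset.Icc (m + 1) (m + (N : ℤ)), (q ^ k - q ^ (k - 1)) * u k :=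
  qi_nabla_qZ_thm36_general q hq m N t ht u hnonneg hmono hyp
end
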